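/- Let γ = (γ_1,…,γ_d) satisfy 1 = γ_1 = … = γ_ν < γ_{ν+1} ≤ … ≤ γ_d with ν ∈ ℕ, ν ≤ d. Then there exist positive constants c1(γ) and c2(γ) such that for all n ∈ ℕ the cardinality of the step hyperbolic cross satisfies c1(γ)·2^n·n^{ν−1} ≤ |Q_n^γ| ≤ c2(γ)·2^n·n^{ν−1}. -/
import Mathlib

noncomputable section

/-- The step hyperbolic cross `Q_n^γ = ∪_{s : (γ,s) ≤ n} ρ(s)` where
`ρ(s) = {k : ⌊2^{s_j-1}⌋ ≤ |k_j| < 2^{s_j}}`. -/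
def hyperbolicCross (d : ℕ) (γ : Fin d → ℝ) (n : ℕ) : Set (Fin d → ℤ) :=
  {k | ∃ s : Fin d → ℕ, (∑ j, γ j * (s j : ℝ)) ≤ (n : ℝ) ∧
    ∀ j, ⌊(2 : ℝ) ^ ((s j : ℤ) - 1)⌋ ≤ |k j| ∧ |k j| < 2 ^ (s j)}

open Finset

/-- number of weights equal to 1 -/
private def nuF {d : ℕ} (γ : Fin d → ℝ) : ℕ := (Finset.univ.filter fun j => γ j = 1).card

/-- the finite set of admissible dyadic exponents -/
private def Sfin (d : ℕ) (γ : Fin d → ℝ) (x : ℝ) : Finset (Fin d → ℕ) :=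
  (Fintype.piFinset fun _ => Finset.range (⌊x⌋₊ + 1)).filter
    fun s => (∑ j, γ j * (s j : ℝ)) ≤ x

private def Tsum (d : ℕ) (γ : Fin d → ℝ) (x : ℝ) : ℝ :=
  ∑ s ∈ Sfin d γ x, (2 : ℝ) ^ (∑ j, s j)

private lemma Tsum_nonneg (d : ℕ) (γ : Fin d → ℝ) (x : ℝ) : 0 ≤ Tsum d γ x :=
  Finset.sum_nonneg fun _ _ => by positivity

private lemma mem_Sfin_iff {d : ℕ} {γ : Fin d → ℝ} (hγ : ∀ j, 1 ≤ γ j) {x : ℝ}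
    {s : Fin d → ℕ} : s ∈ Sfin d γ x ↔ (∑ j, γ j * (s j : ℝ)) ≤ x := by
  constructor
  · intro h; exact (Finset.mem_filter.1 h).2
  · intro h
    refine Finset.mem_filter.2 ⟨Fintype.mem_piFinset.2 fun j => ?_, h⟩
    rw [Finset.mem_range, Nat.lt_succ_iff]
    apply Nat.le_floor
    calc ((s j : ℝ)) ≤ γ j * s j := le_mul_of_one_le_left (Nat.cast_nonneg _) (hγ j)
      _ ≤ ∑ i, γ i * s i :=
        Finset.single_le_sum (f := fun i => γ i * (s i : ℝ)) (fun i _ =>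
          mul_nonneg (by linarith [hγ i]) (Nat.cast_nonneg _)) (Finset.mem_univ j)
      _ ≤ x := h

private lemma Tsum_of_neg {d : ℕ} {γ : Fin d → ℝ} (hγ : ∀ j, 1 ≤ γ j) {x : ℝ} (hx : x < 0) :
    Tsum d γ x = 0 := by
  have : Sfin d γ x = ∅ := by
    rw [Finset.eq_empty_iff_forall_notMem]
    intro s hs
    have h := (mem_Sfin_iff hγ).1 hs
    have h0 : (0:ℝ) ≤ ∑ j, γ j * (s j : ℝ) :=
      Finset.sum_nonneg fun i _ => by have h1 := hγ i; positivity
    linarith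
  rw [Tsum, this, Finset.sum_empty]

private lemma Tsum_zero_le (γ : Fin 0 → ℝ) (x : ℝ) : Tsum 0 γ x ≤ 1 := by
  have h : Tsum 0 γ x = (Sfin 0 γ x).card := by
    simp [Tsum]
  rw [h]
  have : (Sfin 0 γ x).card ≤ Fintype.card (Fin 0 → ℕ) := Finset.card_le_univ _
  simpa using this

private lemma Tsum_rec (d : ℕ) (γ : Fin (d + 1) → ℝ) (hγ : ∀ j, 1 ≤ γ j) (x : ℝ) :
    Tsum (d + 1) γ x ≤ ∑ t ∈ Finset.range (⌊x⌋₊ + 1),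
      (2 : ℝ) ^ t * Tsum d (γ ∘ Fin.castSucc) (x - γ (Fin.last d) * t) := by
  classical
  have hmaps : ∀ s ∈ Sfin (d+1) γ x, s (Fin.last d) ∈ Finset.range (⌊x⌋₊ + 1) :=
    fun s hs => Fintype.mem_piFinset.1 (Finset.mem_filter.1 hs).1 _
  rw [Tsum, ← Finset.sum_fiberwise_of_maps_to hmaps]
  apply Finset.sum_le_sum
  intro t ht
  have hγ' : ∀ j : Fin d, 1 ≤ (γ ∘ Fin.castSucc) j := fun j => hγ _
  have key : ∀ s ∈ (Sfin (d+1) γ x).filter (fun s => s (Fin.last d) = t),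
      s ∘ Fin.castSucc ∈ Sfin d (γ ∘ Fin.castSucc) (x - γ (Fin.last d) * t) := by
    intro s hs
    obtain ⟨hs1, hs2⟩ := Finset.mem_filter.1 hs
    have hsum := (mem_Sfin_iff hγ).1 hs1
    rw [Fin.sum_univ_castSucc (f := fun j => γ j * (s j : ℝ)), hs2] at hsum
    exact (mem_Sfin_iff hγ').2 (by simpa using by linarith)
  have hinj : ∀ s ∈ (Sfin (d+1) γ x).filter (fun s => s (Fin.last d) = t),
      ∀ s' ∈ (Sfin (d+1) γ x).filter (fun s => s (Fin.last d) = t),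
      s ∘ Fin.castSucc = s' ∘ Fin.castSucc → s = s' := by
    intro s hs s' hs' h
    have h1 : s (Fin.last d) = t := (Finset.mem_filter.1 hs).2
    have h2 : s' (Fin.last d) = t := (Finset.mem_filter.1 hs').2
    funext j
    refine Fin.lastCases ?_ (fun i => ?_) j
    · rw [h1, h2]
    · exact congrFun h i
  calc ∑ s ∈ (Sfin (d+1) γ x).filter (fun s => s (Fin.last d) = t), (2:ℝ) ^ (∑ j, s j)
      = ∑ s ∈ (Sfin (d+1) γ x).filter (fun s => s (Fin.last d) = t),
        (2:ℝ) ^ t * (2:ℝ) ^ (∑ j : Fin d, (s ∘ Fin.castSucc) j) := by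
        apply Finset.sum_congr rfl
        intro s hs
        rw [← pow_add, Fin.sum_univ_castSucc (f := fun j => s j),
          (Finset.mem_filter.1 hs).2]
        rw [add_comm]
        rfl
    _ = (2:ℝ) ^ t * ∑ s ∈ (Sfin (d+1) γ x).filter (fun s => s (Fin.last d) = t),
        (2:ℝ) ^ (∑ j : Fin d, (s ∘ Fin.castSucc) j) := by rw [Finset.mul_sum]
    _ ≤ (2:ℝ) ^ t * Tsum d (γ ∘ Fin.castSucc) (x - γ (Fin.last d) * t) := by
        apply mul_le_mul_of_nonneg_left _ (by positivity)
        rw [← Finset.sum_image (f := fun u : Fin d → ℕ => (2:ℝ) ^ (∑ j, u j))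
          (g := fun s => s ∘ Fin.castSucc) hinj, Tsum]
        apply Finset.sum_le_sum_of_subset_of_nonneg
        · intro u hu
          obtain ⟨s, hs, rfl⟩ := Finset.mem_image.1 hu
          exact key s hs
        · intro _ _ _; positivity

private lemma geom_bound {r : ℝ} (h0 : 0 ≤ r) (h1 : r < 1) (N : ℕ) :
    ∑ t ∈ Finset.range N, r ^ t ≤ (1 - r)⁻¹ := by
  have hne : r ≠ 1 := ne_of_lt h1
  have h2 : (r ^ N - 1) / (r - 1) = (1 - r ^ N) / (1 - r) := by
    rw [← neg_div_neg_eq]; ring_nf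
  have hpos : 0 < 1 - r := by linarith
  rw [geom_sum_eq hne, h2, ← one_div]
  exact div_le_div₀ zero_le_one (by nlinarith [pow_nonneg h0 N]) hpos le_rfl

private lemma nuF_castSucc_of_ne {d : ℕ} (γ : Fin (d+1) → ℝ) (h : γ (Fin.last d) ≠ 1) :
    nuF γ = nuF (γ ∘ Fin.castSucc) := by
  classical
  unfold nuF
  rw [Fin.univ_castSuccEmb, Finset.filter_cons, if_neg h, Finset.filter_map,
    Finset.card_map]
  rfl

private lemma nuF_of_all_one {d : ℕ} (γ : Fin d → ℝ) (h : ∀ j, γ j = 1) :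
    nuF γ = d := by
  unfold nuF
  rw [Finset.filter_true_of_mem (fun j _ => h j)]
  simp

private lemma Tsum_bound : ∀ (d : ℕ) (γ : Fin d → ℝ), (∀ j, 1 ≤ γ j) → Monotone γ →
    ∃ C : ℝ, 0 < C ∧ ∀ x : ℝ, 0 ≤ x →
      Tsum d γ x ≤ C * (2 : ℝ) ^ x * (x + 1) ^ (nuF γ - 1) := by
  intro d
  induction d with
  | zero =>
    intro γ _ _
    refine ⟨1, one_pos, fun x hx => ?_⟩
    have h1 := Tsum_zero_le γ x
    have h2 : (1:ℝ) ≤ (2:ℝ) ^ x := Real.one_le_rpow one_le_two hx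
    have h3 : nuF γ = 0 := by unfold nuF; simp
    rw [h3]
    simpa using h1.trans h2
  | succ d ih =>
    intro γ hγ hmono
    have hγ' : ∀ j : Fin d, 1 ≤ (γ ∘ Fin.castSucc) j := fun j => hγ _
    have hmono' : Monotone (γ ∘ Fin.castSucc) :=
      hmono.comp (fun a b hab => by simpa [Fin.castSucc_le_castSucc_iff] using hab)
    obtain ⟨C, hC, hbound⟩ := ih (γ ∘ Fin.castSucc) hγ' hmono'
    by_cases h1 : γ (Fin.last d) = 1
    · -- all weights are one
      have hall : ∀ j, γ j = 1 :=
        fun j => le_antisymm (h1 ▸ hmono (Fin.le_last j)) (hγ j)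
      have hnu : nuF γ = d + 1 := nuF_of_all_one γ hall
      rcases Nat.eq_zero_or_pos d with hd | hd
      · subst hd
        refine ⟨2, two_pos, fun x hx => ?_⟩
        have hrec := Tsum_rec 0 γ hγ x
        have hstep : ∀ t ∈ Finset.range (⌊x⌋₊ + 1),
            (2:ℝ) ^ t * Tsum 0 (γ ∘ Fin.castSucc) (x - γ (Fin.last 0) * t) ≤ (2:ℝ) ^ t :=
          fun t _ => by
            have := Tsum_zero_le (γ ∘ Fin.castSucc) (x - γ (Fin.last 0) * t)
            nlinarith [pow_nonneg (zero_le_two (α := ℝ)) t]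
        have hgeom : ∑ t ∈ Finset.range (⌊x⌋₊ + 1), (2:ℝ) ^ t ≤ 2 * (2:ℝ) ^ x := by
          have he : ∑ t ∈ Finset.range (⌊x⌋₊ + 1), (2:ℝ) ^ t
              = 2 ^ (⌊x⌋₊ + 1) - 1 := by
            have := geom_sum_eq ((by norm_num : (2:ℝ) ≠ 1)) (⌊x⌋₊ + 1)
            rw [this]; norm_num
          rw [he]
          have : ((2:ℝ)) ^ (⌊x⌋₊ : ℕ) ≤ (2:ℝ) ^ x := by
            rw [← Real.rpow_natCast 2 ⌊x⌋₊]
            exact Real.rpow_le_rpow_of_exponent_le one_le_two (Nat.floor_le hx)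
          rw [pow_succ]
          nlinarith
        rw [hnu]
        simpa using hrec.trans ((Finset.sum_le_sum hstep).trans hgeom)
      · refine ⟨C, hC, fun x hx => ?_⟩
        have hnu' : nuF (γ ∘ Fin.castSucc) = d := nuF_of_all_one _ (fun j => hall _)
        have hrec := Tsum_rec d γ hγ x
        have hstep : ∀ t ∈ Finset.range (⌊x⌋₊ + 1),
            (2:ℝ) ^ t * Tsum d (γ ∘ Fin.castSucc) (x - γ (Fin.last d) * t)
              ≤ C * (2:ℝ) ^ x * (x + 1) ^ (d - 1) := by
          intro t ht
          have htx : (t : ℝ) ≤ x := by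
            have h3 : t ≤ ⌊x⌋₊ := Nat.lt_succ_iff.1 (Finset.mem_range.1 ht)
            exact le_trans (by exact_mod_cast h3) (Nat.floor_le hx)
          rw [h1, one_mul]
          have hb := hbound (x - t) (by linarith)
          rw [hnu'] at hb
          have e1 : (2:ℝ) ^ t * (2:ℝ) ^ (x - t) = (2:ℝ) ^ x := by
            rw [← Real.rpow_natCast 2 t, ← Real.rpow_add two_pos]
            ring_nf
          have e2 : (x - t + 1) ^ (d-1) ≤ (x + 1) ^ (d-1) :=
            pow_le_pow_left₀ (by linarith) (by linarith) _
          have hpw : (0:ℝ) ≤ (2:ℝ) ^ t := by positivity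
          have hx2 : (0:ℝ) < (2:ℝ) ^ x := Real.rpow_pos_of_pos two_pos x
          calc (2:ℝ) ^ t * Tsum d (γ ∘ Fin.castSucc) (x - t)
              ≤ (2:ℝ) ^ t * (C * (2:ℝ) ^ (x - t) * (x - t + 1) ^ (d-1)) :=
                mul_le_mul_of_nonneg_left hb hpw
            _ = C * ((2:ℝ) ^ t * (2:ℝ) ^ (x - t)) * (x - t + 1) ^ (d-1) := by ring
            _ = C * (2:ℝ) ^ x * (x - t + 1) ^ (d-1) := by rw [e1]
            _ ≤ C * (2:ℝ) ^ x * (x + 1) ^ (d-1) :=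
                mul_le_mul_of_nonneg_left e2 (by positivity)
        have hcard : ((⌊x⌋₊ : ℝ) + 1) ≤ x + 1 := by
          have := Nat.floor_le hx; linarith
        have hfin : Tsum (d+1) γ x ≤ ((⌊x⌋₊ + 1 : ℕ) : ℝ) * (C * (2:ℝ) ^ x * (x + 1) ^ (d-1)) := by
          refine hrec.trans ?_
          refine (Finset.sum_le_sum hstep).trans ?_
          rw [Finset.sum_const, Finset.card_range, nsmul_eq_mul]
        rw [hnu]
        have hx2 : (0:ℝ) < (2:ℝ) ^ x := Real.rpow_pos_of_pos two_pos x
        have hd1 : d - 1 + 1 = d := Nat.succ_pred_eq_of_pos hd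
        calc Tsum (d+1) γ x ≤ ((⌊x⌋₊ + 1 : ℕ) : ℝ) * (C * (2:ℝ) ^ x * (x + 1) ^ (d-1)) := hfin
          _ ≤ (x + 1) * (C * (2:ℝ) ^ x * (x + 1) ^ (d-1)) := by
              apply mul_le_mul_of_nonneg_right _ (by positivity)
              push_cast
              linarith [Nat.floor_le hx]
          _ = C * (2:ℝ) ^ x * ((x + 1) ^ (d-1) * (x+1)) := by ring
          _ = C * (2:ℝ) ^ x * (x + 1) ^ (d + 1 - 1) := by
              rw [← pow_succ, hd1]; norm_num
    · -- the last weight exceeds one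
      have hg : 1 < γ (Fin.last d) := lt_of_le_of_ne (hγ _) (Ne.symm h1)
      set g := γ (Fin.last d) with hgdef
      set r : ℝ := (2:ℝ) ^ ((1:ℝ) - g) with hrdef
      have hr0 : 0 ≤ r := le_of_lt (Real.rpow_pos_of_pos two_pos _)
      have hr1 : r < 1 := Real.rpow_lt_one_of_one_lt_of_neg one_lt_two (by linarith)
      have hrr : 0 < 1 - r := by linarith
      have hnu : nuF γ = nuF (γ ∘ Fin.castSucc) := nuF_castSucc_of_ne γ h1
      refine ⟨C * (1 - r)⁻¹, by positivity, fun x hx => ?_⟩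
      set p := nuF (γ ∘ Fin.castSucc) - 1 with hpdef
      have hx2 : (0:ℝ) < (2:ℝ) ^ x := Real.rpow_pos_of_pos two_pos x
      have hstep : ∀ t ∈ Finset.range (⌊x⌋₊ + 1),
          (2:ℝ) ^ t * Tsum d (γ ∘ Fin.castSucc) (x - g * t)
            ≤ (C * (2:ℝ) ^ x * (x + 1) ^ p) * r ^ t := by
        intro t ht
        have hrt : r ^ t = (2:ℝ) ^ (((1:ℝ) - g) * t) := by
          rw [hrdef, ← Real.rpow_natCast ((2:ℝ) ^ ((1:ℝ) - g)) t, ← Real.rpow_mul (by norm_num)]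
        have hrtpos : (0:ℝ) < r ^ t := pow_pos (Real.rpow_pos_of_pos two_pos _) t
        rcases le_or_gt 0 (x - g * t) with hpos | hneg
        · have hb := hbound (x - g * t) hpos
          have e1 : (2:ℝ) ^ t * (2:ℝ) ^ (x - g * t) = (2:ℝ) ^ x * r ^ t := by
            rw [hrt, ← Real.rpow_natCast 2 t, ← Real.rpow_add two_pos, ← Real.rpow_add two_pos]
            ring_nf
          have e2 : (x - g * t + 1) ^ p ≤ (x + 1) ^ p := by
            apply pow_le_pow_left₀ (by linarith)
            have : 0 ≤ g * t := by positivity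
            linarith
          have hpw : (0:ℝ) ≤ (2:ℝ) ^ t := by positivity
          calc (2:ℝ) ^ t * Tsum d (γ ∘ Fin.castSucc) (x - g * t)
              ≤ (2:ℝ) ^ t * (C * (2:ℝ) ^ (x - g * t) * (x - g * t + 1) ^ p) :=
                mul_le_mul_of_nonneg_left hb hpw
            _ = C * ((2:ℝ) ^ t * (2:ℝ) ^ (x - g * t)) * (x - g * t + 1) ^ p := by ring
            _ = C * ((2:ℝ) ^ x * r ^ t) * (x - g * t + 1) ^ p := by rw [e1]
            _ ≤ C * ((2:ℝ) ^ x * r ^ t) * (x + 1) ^ p := by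
                apply mul_le_mul_of_nonneg_left e2
                positivity
            _ = (C * (2:ℝ) ^ x * (x + 1) ^ p) * r ^ t := by ring
        · rw [Tsum_of_neg hγ' hneg, mul_zero]
          have : 0 ≤ x + 1 := by linarith
          positivity
      have hgeom := geom_bound hr0 hr1 (⌊x⌋₊ + 1)
      have hfin := (Tsum_rec d γ hγ x).trans (Finset.sum_le_sum hstep)
      rw [← Finset.mul_sum] at hfin
      rw [hnu, ← hpdef]
      calc Tsum (d+1) γ x
          ≤ (C * (2:ℝ) ^ x * (x + 1) ^ p) * ∑ t ∈ Finset.range (⌊x⌋₊ + 1), r ^ t := hfin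
        _ ≤ (C * (2:ℝ) ^ x * (x + 1) ^ p) * (1 - r)⁻¹ := by
            apply mul_le_mul_of_nonneg_left hgeom
            have : 0 ≤ x + 1 := by linarith
            positivity
        _ = C * (1 - r)⁻¹ * (2:ℝ) ^ x * (x + 1) ^ p := by ring

private lemma floor_two_zpow (a : ℕ) :
    ⌊(2:ℝ) ^ ((a : ℤ) - 1)⌋ = if a = 0 then 0 else 2 ^ (a - 1) := by
  cases a with
  | zero =>
    rw [if_pos rfl]
    have h : ((0:ℕ) : ℤ) - 1 = -1 := by norm_num
    rw [h, zpow_neg_one, Int.floor_eq_zero_iff]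
    constructor <;> norm_num
  | succ a =>
    have h : ((a + 1 : ℕ) : ℤ) - 1 = (a : ℤ) := by push_cast; ring
    rw [h, if_neg (Nat.succ_ne_zero a), zpow_natCast]
    have h2 : ((2:ℝ)) ^ a = (((2 ^ a : ℤ)) : ℝ) := by push_cast; ring
    rw [h2, Int.floor_intCast]
    simp

private lemma dyadic_unique {a b : ℕ} (ha : 1 ≤ a) (hb : 1 ≤ b) {m : ℤ}
    (h1 : (2:ℤ) ^ (a - 1) ≤ m) (h2 : m < 2 ^ a) (h3 : (2:ℤ) ^ (b - 1) ≤ m)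
    (h4 : m < 2 ^ b) : a = b := by
  rcases lt_trichotomy a b with h | h | h
  · exfalso
    have : (2:ℤ) ^ a ≤ 2 ^ (b - 1) := pow_le_pow_right₀ one_le_two (by omega)
    omega
  · exact h
  · exfalso
    have : (2:ℤ) ^ b ≤ 2 ^ (a - 1) := pow_le_pow_right₀ one_le_two (by omega)
    omega

private lemma card_filter_val_lt (d ν : ℕ) (hνd : ν ≤ d) :
    (Finset.univ.filter fun j : Fin d => (j : ℕ) < ν).card = ν := by
  have h : (Finset.univ.filter fun j : Fin d => (j : ℕ) < ν).card
      = (Finset.range ν).card := by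
    refine Finset.card_bij' (fun j _ => (j : ℕ))
      (fun m hm => (⟨m, lt_of_lt_of_le (Finset.mem_range.1 hm) hνd⟩ : Fin d))
      ?_ ?_ ?_ ?_
    · intro j hj
      exact Finset.mem_range.2 (Finset.mem_filter.1 hj).2
    · intro m hm
      exact Finset.mem_filter.2 ⟨Finset.mem_univ _, Finset.mem_range.1 hm⟩
    · intro j hj; rfl
    · intro m hm; rfl
  rw [h, Finset.card_range]

private lemma card_filter_mid (d ν : ℕ) (hνd : ν ≤ d) :
    (Finset.univ.filter fun j : Fin d => 1 ≤ (j : ℕ) ∧ (j : ℕ) < ν).card = ν - 1 := by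
  have h : (Finset.univ.filter fun j : Fin d => 1 ≤ (j : ℕ) ∧ (j : ℕ) < ν).card
      = (Finset.Ico 1 ν).card := by
    refine Finset.card_bij' (fun j _ => (j : ℕ))
      (fun m hm => (⟨m, lt_of_lt_of_le (Finset.mem_Ico.1 hm).2 hνd⟩ : Fin d))
      ?_ ?_ ?_ ?_
    · intro j hj
      exact Finset.mem_Ico.2 (Finset.mem_filter.1 hj).2
    · intro m hm
      exact Finset.mem_filter.2 ⟨Finset.mem_univ _, Finset.mem_Ico.1 hm⟩
    · intro j hj; rfl
    · intro m hm; rfl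
  rw [h, Nat.card_Ico]

private lemma lower_card (d ν n b : ℕ) (γ : Fin d → ℝ) (hν : 1 ≤ ν) (hνd : ν ≤ d)
    (hγ1 : ∀ j : Fin d, (j : ℕ) < ν → γ j = 1) (hb : 1 ≤ b)
    (hbn : (ν - 1) * b + 2 ≤ n) :
    ∃ G : Finset (Fin d → ℤ), ↑G ⊆ hyperbolicCross d γ n ∧
      b ^ (ν - 1) * 2 ^ (n - ν) ≤ G.card := by
  classical
  have hd : 0 < d := lt_of_lt_of_le hν hνd
  set z : Fin d := ⟨0, hd⟩ with hz
  set mid : Finset (Fin d) :=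
    Finset.univ.filter (fun j : Fin d => 1 ≤ (j : ℕ) ∧ (j : ℕ) < ν) with hmid
  set K : Finset (Fin d) :=
    Finset.univ.filter (fun j : Fin d => (j : ℕ) < ν) with hK
  have hmidcard : mid.card = ν - 1 := card_filter_mid d ν hνd
  have hKcard : K.card = ν := card_filter_val_lt d ν hνd
  set T : Finset (Fin d → ℕ) := Fintype.piFinset fun j =>
    if 1 ≤ (j : ℕ) ∧ (j : ℕ) < ν then Finset.Icc 1 b else {0} with hT
  set sfun : (Fin d → ℕ) → (Fin d → ℕ) :=
    fun t j => if (j : ℕ) = 0 then n - (∑ i, t i) else t j with hsfun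
  set box : (Fin d → ℕ) → Finset (Fin d → ℤ) := fun s => Fintype.piFinset fun j =>
    if s j = 0 then ({0} : Finset ℤ)
    else Finset.Ico ((2:ℤ) ^ (s j - 1)) (2 ^ (s j)) with hbox
  -- basic facts about elements of T
  have hT0 : ∀ t ∈ T, ∀ j : Fin d, ¬(1 ≤ (j : ℕ) ∧ (j : ℕ) < ν) → t j = 0 := by
    intro t ht j hj
    have h := Fintype.mem_piFinset.1 ht j
    rw [if_neg hj] at h
    simpa using h
  have hTmid : ∀ t ∈ T, ∀ j : Fin d, (1 ≤ (j : ℕ) ∧ (j : ℕ) < ν) →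
      1 ≤ t j ∧ t j ≤ b := by
    intro t ht j hj
    have h := Fintype.mem_piFinset.1 ht j
    rw [if_pos hj] at h
    exact Finset.mem_Icc.1 h
  have hsumT : ∀ t ∈ T, (∑ i, t i) + 2 ≤ n := by
    intro t ht
    have h1 : ∑ i, t i = ∑ i ∈ mid, t i := by
      rw [← Finset.sum_filter_add_sum_filter_not Finset.univ
        (fun j : Fin d => 1 ≤ (j : ℕ) ∧ (j : ℕ) < ν) t]
      have h0 : ∑ i ∈ Finset.univ.filter
          (fun j : Fin d => ¬(1 ≤ (j : ℕ) ∧ (j : ℕ) < ν)), t i = 0 :=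
        Finset.sum_eq_zero fun j hj => hT0 t ht j (Finset.mem_filter.1 hj).2
      rw [h0, ← hmid]
      omega
    have h2 : ∑ i ∈ mid, t i ≤ (ν - 1) * b := by
      have h3 : ∑ i ∈ mid, t i ≤ ∑ _i ∈ mid, b :=
        Finset.sum_le_sum fun i hi => (hTmid t ht i (Finset.mem_filter.1 hi).2).2
      rw [Finset.sum_const, smul_eq_mul, hmidcard] at h3
      exact h3
    calc (∑ i, t i) + 2 = (∑ i ∈ mid, t i) + 2 := by rw [h1]
      _ ≤ (ν - 1) * b + 2 := Nat.add_le_add_right h2 2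
      _ ≤ n := hbn
  have hsfun_z : ∀ t, sfun t z = n - (∑ i, t i) := fun t => by
    simp [hsfun, hz]
  have hsfun_ne : ∀ t, ∀ j : Fin d, (j : ℕ) ≠ 0 → sfun t j = t j := by
    intro t j hj
    rw [hsfun]
    simp [hj]
  have htz : ∀ t ∈ T, t z = 0 := by
    intro t ht
    exact hT0 t ht z (by simp [hz])
  have hsfun_K0 : ∀ t ∈ T, ∀ j : Fin d, ν ≤ (j : ℕ) → sfun t j = 0 := by
    intro t ht j hj
    rw [hsfun_ne t j (by omega)]
    exact hT0 t ht j (by omega)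
  have hsum_sfun : ∀ t ∈ T, ∑ j, sfun t j = n := by
    intro t ht
    have h1 : sfun t z + ∑ j ∈ Finset.univ.erase z, sfun t j = ∑ j, sfun t j :=
      Finset.add_sum_erase _ _ (Finset.mem_univ z)
    have h2 : ∑ j ∈ Finset.univ.erase z, sfun t j
        = ∑ j ∈ Finset.univ.erase z, t j := by
      apply Finset.sum_congr rfl
      intro j hj
      have hjz : j ≠ z := (Finset.mem_erase.1 hj).1
      apply hsfun_ne
      intro hc
      exact hjz (Fin.ext (by simp [hz, hc]))
    have h3 : ∑ j ∈ Finset.univ.erase z, t j = ∑ j, t j :=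
      Finset.sum_erase _ (htz t ht)
    have h4 := hsumT t ht
    rw [← h1, h2, h3, hsfun_z]
    omega
  have hsfun_pos : ∀ t ∈ T, ∀ j ∈ K, 1 ≤ sfun t j := by
    intro t ht j hj
    have hjK : (j : ℕ) < ν := (Finset.mem_filter.1 hj).2
    rcases Nat.eq_zero_or_pos (j : ℕ) with h0 | h0
    · have : j = z := Fin.ext (by simp [hz, h0])
      rw [this, hsfun_z]
      have := hsumT t ht
      omega
    · rw [hsfun_ne t j (by omega)]
      exact (hTmid t ht j ⟨h0, hjK⟩).1
  -- the subset
  refine ⟨T.biUnion (fun t => box (sfun t)), ?_, ?_⟩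
  · intro k hk
    obtain ⟨t, ht, hkt⟩ := Finset.mem_biUnion.1 hk
    refine ⟨sfun t, ?_, ?_⟩
    · have hc : ∀ j : Fin d, γ j * ((sfun t j : ℕ) : ℝ) = ((sfun t j : ℕ) : ℝ) := by
        intro j
        rcases lt_or_ge (j : ℕ) ν with h | h
        · rw [hγ1 j h, one_mul]
        · rw [hsfun_K0 t ht j h]
          simp
      rw [Finset.sum_congr rfl (fun j _ => hc j), ← Nat.cast_sum, hsum_sfun t ht]
    · intro j
      have hkj := Fintype.mem_piFinset.1 hkt j
      rcases Nat.eq_zero_or_pos (sfun t j) with h0 | h0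
      · rw [if_pos h0] at hkj
        have hk0 : k j = 0 := by simpa using hkj
        rw [hk0, h0]
        constructor
        · rw [floor_two_zpow 0, if_pos rfl]
          simp
        · simp
      · rw [if_neg h0.ne'] at hkj
        obtain ⟨hlo, hhi⟩ := Finset.mem_Ico.1 hkj
        have hpos : (0:ℤ) < k j := lt_of_lt_of_le (pow_pos two_pos _) hlo
        have habs : |k j| = k j := abs_of_pos hpos
        constructor
        · rw [floor_two_zpow, if_neg h0.ne', habs]
          exact hlo
        · rw [habs]
          exact hhi
  -- the cardinality
  · have hdisj : ∀ t ∈ T, ∀ t' ∈ T, t ≠ t' →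
        Disjoint (box (sfun t)) (box (sfun t')) := by
      intro t ht t' ht' hne
      rw [Finset.disjoint_left]
      intro k hk hk'
      apply hne
      funext j
      by_cases hj : 1 ≤ (j : ℕ) ∧ (j : ℕ) < ν
      · have e1 : sfun t j = t j := hsfun_ne t j (by omega)
        have e2 : sfun t' j = t' j := hsfun_ne t' j (by omega)
        have p1 := (hTmid t ht j hj).1
        have p2 := (hTmid t' ht' j hj).1
        have m1 := Fintype.mem_piFinset.1 hk j
        have m2 := Fintype.mem_piFinset.1 hk' j
        rw [e1, if_neg (by omega)] at m1
        rw [e2, if_neg (by omega)] at m2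
        obtain ⟨a1, a2⟩ := Finset.mem_Ico.1 m1
        obtain ⟨b1, b2⟩ := Finset.mem_Ico.1 m2
        exact dyadic_unique p1 p2 a1 a2 b1 b2
      · rw [hT0 t ht j hj, hT0 t' ht' j hj]
    rw [Finset.card_biUnion hdisj]
    have hboxcard : ∀ t ∈ T, 2 ^ (n - ν) ≤ (box (sfun t)).card := by
      intro t ht
      have hc : (box (sfun t)).card = ∏ j, (2:ℕ) ^ (sfun t j - 1) := by
        rw [hbox]
        rw [Fintype.card_piFinset]
        apply Finset.prod_congr rfl
        intro j _
        rcases Nat.eq_zero_or_pos (sfun t j) with h0 | h0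
        · rw [if_pos h0, h0]
          simp
        · rw [if_neg h0.ne']
          rw [Int.card_Ico]
          obtain ⟨m, hm⟩ := Nat.exists_eq_add_of_le h0
          rw [hm]
          have he : (2:ℤ) ^ (1 + m) - 2 ^ (1 + m - 1) = ((2 ^ (1 + m - 1) : ℕ) : ℤ) := by
            simp only [Nat.add_sub_cancel_left]
            push_cast
            ring
          rw [he, Int.toNat_natCast]
      rw [hc, Finset.prod_pow_eq_pow_sum]
      apply Nat.pow_le_pow_right (by norm_num)
      -- ∑ j (sfun t j - 1) = n - ν
      have h1 : ∑ j, (sfun t j - 1) = ∑ j ∈ K, (sfun t j - 1) := by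
        rw [← Finset.sum_filter_add_sum_filter_not Finset.univ
          (fun j : Fin d => (j : ℕ) < ν) (fun j => sfun t j - 1)]
        have h0 : ∑ j ∈ Finset.univ.filter
            (fun j : Fin d => ¬((j : ℕ) < ν)), (sfun t j - 1) = 0 := by
          apply Finset.sum_eq_zero
          intro j hj
          have hge : ν ≤ (j : ℕ) := Nat.le_of_not_lt (Finset.mem_filter.1 hj).2
          rw [hsfun_K0 t ht j hge]
          rfl
        rw [h0, ← hK]
        omega
      have h2 : ∑ j ∈ K, (sfun t j - 1) + K.card = ∑ j ∈ K, sfun t j := by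
        have hstep : ∀ j ∈ K, (sfun t j - 1) + 1 = sfun t j :=
          fun j hj => Nat.succ_pred_eq_of_pos (hsfun_pos t ht j hj)
        calc ∑ j ∈ K, (sfun t j - 1) + K.card
            = ∑ j ∈ K, ((sfun t j - 1) + 1) := by
              rw [Finset.sum_add_distrib, Finset.sum_const, smul_eq_mul, mul_one]
          _ = ∑ j ∈ K, sfun t j := Finset.sum_congr rfl hstep
      have h3 : ∑ j ∈ K, sfun t j = n := by
        rw [← hsum_sfun t ht]
        apply Finset.sum_subset (Finset.subset_univ K)
        intro j _ hjK
        apply hsfun_K0 t ht j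
        apply Nat.le_of_not_lt
        intro hc
        exact hjK (Finset.mem_filter.2 ⟨Finset.mem_univ _, hc⟩)
      rw [h1]
      omega
    have hTcard : T.card = b ^ (ν - 1) := by
      rw [hT, Fintype.card_piFinset]
      have hcard1 : ∀ j : Fin d, ((if 1 ≤ (j : ℕ) ∧ (j : ℕ) < ν
          then Finset.Icc 1 b else {0}) : Finset ℕ).card
          = if 1 ≤ (j : ℕ) ∧ (j : ℕ) < ν then b else 1 := by
        intro j
        split <;> simp [Nat.card_Icc]
      rw [Finset.prod_congr rfl (fun j _ => hcard1 j)]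
      rw [Finset.prod_ite, Finset.prod_const, Finset.prod_const, one_pow, mul_one]
      rw [card_filter_mid d ν hνd]
    calc b ^ (ν - 1) * 2 ^ (n - ν) = T.card * 2 ^ (n - ν) := by rw [hTcard]
      _ = ∑ _t ∈ T, 2 ^ (n - ν) := by rw [Finset.sum_const, smul_eq_mul]
      _ ≤ ∑ t ∈ T, (box (sfun t)).card := Finset.sum_le_sum hboxcard

private lemma upper_card (d : ℕ) (γ : Fin d → ℝ) (hγ : ∀ j, 1 ≤ γ j) (n : ℕ) :
    (hyperbolicCross d γ n).Finite ∧
    ((hyperbolicCross d γ n).ncard : ℝ) ≤ 4 ^ d * Tsum d γ (n : ℝ) := by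
  classical
  set F : Finset (Fin d → ℤ) := (Sfin d γ (n : ℝ)).biUnion (fun s =>
    Fintype.piFinset fun j => Finset.Icc (-(2 ^ (s j) : ℤ)) (2 ^ (s j))) with hF
  have hsub : hyperbolicCross d γ n ⊆ ↑F := by
    intro k hk
    obtain ⟨s, hs1, hs2⟩ := hk
    apply Finset.mem_coe.2
    rw [hF]
    apply Finset.mem_biUnion.2
    refine ⟨s, (mem_Sfin_iff hγ).2 hs1, ?_⟩
    apply Fintype.mem_piFinset.2
    intro j
    rw [Finset.mem_Icc]
    exact abs_le.1 (le_of_lt (hs2 j).2)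
  have hfin : (hyperbolicCross d γ n).Finite := Set.Finite.subset F.finite_toSet hsub
  refine ⟨hfin, ?_⟩
  have h1 : (hyperbolicCross d γ n).ncard ≤ F.card := by
    have h := Set.ncard_le_ncard hsub F.finite_toSet
    rwa [Set.ncard_coe_finset] at h
  have hbox : ∀ s : Fin d → ℕ,
      (((Fintype.piFinset fun j => Finset.Icc (-(2 ^ (s j) : ℤ)) (2 ^ (s j))).card : ℕ) : ℝ)
        ≤ 4 ^ d * 2 ^ (∑ j, s j) := by
    intro s
    rw [Fintype.card_piFinset]
    have hcard : ∀ j, (Finset.Icc (-(2 ^ (s j) : ℤ)) (2 ^ (s j))).card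
        = 2 * 2 ^ (s j) + 1 := by
      intro j
      rw [Int.card_Icc]
      have he : (2 ^ (s j) : ℤ) + 1 - -(2 ^ (s j)) = ((2 * 2 ^ (s j) + 1 : ℕ) : ℤ) := by
        push_cast; ring
      rw [he, Int.toNat_natCast]
    rw [Finset.prod_congr rfl (fun j _ => hcard j)]
    have hle : (∏ j, (2 * 2 ^ (s j) + 1) : ℕ) ≤ ∏ j, 4 * 2 ^ (s j) := by
      apply Finset.prod_le_prod'
      intro j _
      have h1 : 1 ≤ 2 ^ (s j) := Nat.one_le_two_pow
      omega
    have he2 : (∏ j, 4 * 2 ^ (s j) : ℕ) = 4 ^ d * 2 ^ (∑ j, s j) := by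
      rw [Finset.prod_mul_distrib, Finset.prod_const, Finset.prod_pow_eq_pow_sum]
      simp
    calc ((∏ j, (2 * 2 ^ (s j) + 1) : ℕ) : ℝ) ≤ ((∏ j, 4 * 2 ^ (s j) : ℕ) : ℝ) := by
          exact_mod_cast hle
      _ = 4 ^ d * 2 ^ (∑ j, s j) := by rw [he2]; push_cast; ring
  have h2 : (F.card : ℝ) ≤ 4 ^ d * Tsum d γ (n : ℝ) := by
    have hcb := Finset.card_biUnion_le (s := Sfin d γ (n : ℝ))
      (t := fun s => Fintype.piFinset fun j => Finset.Icc (-(2 ^ (s j) : ℤ)) (2 ^ (s j)))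
    calc (F.card : ℝ)
        ≤ ((∑ s ∈ Sfin d γ (n : ℝ), (Fintype.piFinset fun j =>
            Finset.Icc (-(2 ^ (s j) : ℤ)) (2 ^ (s j))).card : ℕ) : ℝ) := by
          rw [hF]; exact_mod_cast hcb
      _ = ∑ s ∈ Sfin d γ (n : ℝ), (((Fintype.piFinset fun j =>
            Finset.Icc (-(2 ^ (s j) : ℤ)) (2 ^ (s j))).card : ℕ) : ℝ) := by push_cast; rfl
      _ ≤ ∑ s ∈ Sfin d γ (n : ℝ), 4 ^ d * 2 ^ (∑ j, s j) :=
          Finset.sum_le_sum fun s _ => hbox s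
      _ = 4 ^ d * Tsum d γ (n : ℝ) := by rw [Tsum, Finset.mul_sum]
  exact le_trans (by exact_mod_cast h1) h2

/-- Cardinality of the step hyperbolic cross:
`|Q_n^γ| ≍ 2^n n^{ν-1}` with constants depending only on `γ`. -/
theorem stmt_18 (d ν : ℕ) (γ : Fin d → ℝ)
    (hν : 1 ≤ ν) (hνd : ν ≤ d)
    (hγ1 : ∀ j : Fin d, (j : ℕ) < ν → γ j = 1)
    (hγ2 : ∀ j : Fin d, ν ≤ (j : ℕ) → 1 < γ j)
    (hγmono : Monotone γ) :
    ∃ c1 c2 : ℝ, 0 < c1 ∧ 0 < c2 ∧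
      ∀ n : ℕ, 1 ≤ n →
        c1 * 2 ^ n * (n : ℝ) ^ (ν - 1) ≤ ((hyperbolicCross d γ n).ncard : ℝ) ∧
        ((hyperbolicCross d γ n).ncard : ℝ) ≤ c2 * 2 ^ n * (n : ℝ) ^ (ν - 1) := by
  classical
  have hγ : ∀ j, 1 ≤ γ j := fun j => by
    rcases lt_or_ge (j : ℕ) ν with h | h
    · exact le_of_eq (hγ1 j h).symm
    · exact le_of_lt (hγ2 j h)
  obtain ⟨C, hC, hbound⟩ := Tsum_bound d γ hγ hγmono
  have hnuF : nuF γ = ν := by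
    unfold nuF
    have he : (Finset.univ.filter fun j => γ j = 1)
        = (Finset.univ.filter fun j : Fin d => (j : ℕ) < ν) := by
      apply Finset.filter_congr
      intro j _
      constructor
      · intro h
        by_contra hc
        exact absurd h (ne_of_gt (hγ2 j (Nat.le_of_not_lt hc)))
      · exact fun h => hγ1 j h
    rw [he, card_filter_val_lt d ν hνd]
  set c1 : ℝ := ((2 : ℝ) ^ (2 * ν) * (2 * ν : ℝ) ^ (ν - 1))⁻¹ with hc1
  set c2 : ℝ := 4 ^ d * C * 2 ^ (ν - 1) with hc2
  have hνpos : (0:ℝ) < (ν : ℝ) := by exact_mod_cast hν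
  refine ⟨c1, c2, by positivity, by positivity, ?_⟩
  intro n hn
  obtain ⟨hfin, hupper⟩ := upper_card d γ hγ n
  constructor
  · -- lower bound
    rcases lt_or_ge n (2 * ν) with hsmall | hlarge
    · -- small n : the cross contains 0
      have h0 : (0 : Fin d → ℤ) ∈ hyperbolicCross d γ n := by
        refine ⟨fun _ => 0, by simp, fun j => ?_⟩
        constructor
        · have h1 : ((0:ℕ) : ℤ) - 1 = -1 := by norm_num
          rw [h1, zpow_neg_one]
          have h2 : ⌊((2:ℝ))⁻¹⌋ = 0 := by
            rw [Int.floor_eq_zero_iff]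
            constructor <;> norm_num
          rw [h2]
          simp
        · simp
      have hpos : 1 ≤ (hyperbolicCross d γ n).ncard :=
        (Set.ncard_pos hfin).2 ⟨0, h0⟩
      have hb1 : (2:ℝ) ^ n * (n : ℝ) ^ (ν - 1)
          ≤ 2 ^ (2 * ν) * (2 * ν : ℝ) ^ (ν - 1) := by
        apply mul_le_mul
        · exact pow_le_pow_right₀ one_le_two (le_of_lt hsmall)
        · apply pow_le_pow_left₀ (Nat.cast_nonneg n)
          exact_mod_cast le_of_lt hsmall
        · positivity
        · positivity
      have hKpos : (0:ℝ) < 2 ^ (2 * ν) * (2 * ν : ℝ) ^ (ν - 1) := by positivity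
      calc c1 * 2 ^ n * (n : ℝ) ^ (ν - 1)
          = (2 ^ (2 * ν) * (2 * ν : ℝ) ^ (ν - 1))⁻¹ * (2 ^ n * (n : ℝ) ^ (ν - 1)) := by
            rw [hc1]; ring
        _ ≤ (2 ^ (2 * ν) * (2 * ν : ℝ) ^ (ν - 1))⁻¹
            * (2 ^ (2 * ν) * (2 * ν : ℝ) ^ (ν - 1)) := by
            apply mul_le_mul_of_nonneg_left hb1
            positivity
        _ = 1 := inv_mul_cancel₀ (ne_of_gt hKpos)
        _ ≤ ((hyperbolicCross d γ n).ncard : ℝ) := by exact_mod_cast hpos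
    · -- large n : use the explicit family
      set b : ℕ := n / ν with hbdef
      have hν0 : 0 < ν := hν
      have hdm := Nat.div_add_mod n ν
      rw [← hbdef] at hdm
      have hmlt : n % ν < ν := Nat.mod_lt _ hν0
      have hb2 : 2 ≤ b := by
        rw [hbdef]
        rw [Nat.le_div_iff_mul_le hν0]
        omega
      have hmul : ν * b ≤ n := by omega
      have hbn : (ν - 1) * b + 2 ≤ n := by
        have h1 : (ν - 1) * b + b = ν * b := by
          have : (ν - 1) + 1 = ν := Nat.succ_pred_eq_of_pos hν0
          calc (ν - 1) * b + b = ((ν - 1) + 1) * b := by ring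
            _ = ν * b := by rw [this]
        omega
      obtain ⟨G, hGsub, hGcard⟩ := lower_card d ν n b γ hν hνd hγ1 (by omega) hbn
      have hcard_le : ((G.card : ℕ) : ℝ) ≤ ((hyperbolicCross d γ n).ncard : ℝ) := by
        have h := Set.ncard_le_ncard hGsub hfin
        rw [Set.ncard_coe_finset] at h
        exact_mod_cast h
      have hνb : ν ≤ ν * b := Nat.le_mul_of_pos_right ν (by omega)
      have hn2 : (n : ℝ) ≤ 2 * ν * b := by
        have hnat : n ≤ 2 * (ν * b) := by omega
        have : ((n:ℕ):ℝ) ≤ ((2 * (ν * b) : ℕ) : ℝ) := by exact_mod_cast hnat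
        push_cast at this ⊢
        linarith
      have hνn : ν ≤ n := by omega
      -- real arithmetic
      have hsplit : (2:ℝ) ^ (n - ν) = 2 ^ n / 2 ^ ν := by
        rw [eq_div_iff (by positivity)]
        rw [← pow_add]
        congr 1
        omega
      have hP : (n : ℝ) ^ (ν - 1) ≤ (2 * ν : ℝ) ^ (ν - 1) * (b : ℝ) ^ (ν - 1) := by
        rw [← mul_pow]
        apply pow_le_pow_left₀ (Nat.cast_nonneg n)
        exact hn2
      have hfrac : c1 * (2 * ν : ℝ) ^ (ν - 1) * 2 ^ ν ≤ 1 := by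
        have hpos2 : (0:ℝ) < 2 ^ (2 * ν) * (2 * ν : ℝ) ^ (ν - 1) := by positivity
        have heq : c1 * (2 * ν : ℝ) ^ (ν - 1) * 2 ^ ν
            = ((2:ℝ) ^ ν * (2 * ν : ℝ) ^ (ν - 1)) / (2 ^ (2 * ν) * (2 * ν : ℝ) ^ (ν - 1)) := by
          rw [hc1]; ring
        rw [heq]
        apply div_le_one_of_le₀
        · apply mul_le_mul_of_nonneg_right _ (by positivity)
          exact pow_le_pow_right₀ one_le_two (by omega)
        · positivity
      have hGR : ((b ^ (ν - 1) * 2 ^ (n - ν) : ℕ) : ℝ) ≤ (G.card : ℝ) := by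
        exact_mod_cast hGcard
      calc c1 * 2 ^ n * (n : ℝ) ^ (ν - 1)
          ≤ c1 * 2 ^ n * ((2 * ν : ℝ) ^ (ν - 1) * (b : ℝ) ^ (ν - 1)) := by
            apply mul_le_mul_of_nonneg_left hP
            positivity
        _ = (c1 * (2 * ν : ℝ) ^ (ν - 1) * 2 ^ ν) * ((b:ℝ) ^ (ν - 1) * (2 ^ n / 2 ^ ν)) := by
            field_simp
        _ ≤ 1 * ((b:ℝ) ^ (ν - 1) * (2 ^ n / 2 ^ ν)) := by
            apply mul_le_mul_of_nonneg_right hfrac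
            positivity
        _ = (b:ℝ) ^ (ν - 1) * (2:ℝ) ^ (n - ν) := by
            rw [hsplit]; ring
        _ = ((b ^ (ν - 1) * 2 ^ (n - ν) : ℕ) : ℝ) := by push_cast; ring
        _ ≤ (G.card : ℝ) := hGR
        _ ≤ ((hyperbolicCross d γ n).ncard : ℝ) := hcard_le
  · -- upper bound
    have hT := hbound (n : ℝ) (Nat.cast_nonneg n)
    rw [hnuF] at hT
    have hn1 : (1:ℝ) ≤ (n:ℝ) := by exact_mod_cast hn
    have hrp : (2:ℝ) ^ ((n:ℕ) : ℝ) = 2 ^ (n:ℕ) := Real.rpow_natCast 2 n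
    have hstep : ((n:ℝ) + 1) ^ (ν - 1) ≤ 2 ^ (ν - 1) * (n:ℝ) ^ (ν - 1) := by
      rw [← mul_pow]
      apply pow_le_pow_left₀ (by linarith)
      linarith
    calc ((hyperbolicCross d γ n).ncard : ℝ)
        ≤ 4 ^ d * Tsum d γ (n : ℝ) := hupper
      _ ≤ 4 ^ d * (C * (2:ℝ) ^ ((n:ℕ):ℝ) * ((n:ℝ) + 1) ^ (ν - 1)) := by
          apply mul_le_mul_of_nonneg_left hT (by positivity)
      _ ≤ 4 ^ d * (C * (2:ℝ) ^ ((n:ℕ):ℝ) * (2 ^ (ν - 1) * (n:ℝ) ^ (ν - 1))) := by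
          apply mul_le_mul_of_nonneg_left _ (by positivity)
          apply mul_le_mul_of_nonneg_left hstep
          have : (0:ℝ) < (2:ℝ) ^ ((n:ℕ):ℝ) := Real.rpow_pos_of_pos two_pos _
          positivity
      _ = c2 * 2 ^ n * (n : ℝ) ^ (ν - 1) := by
          rw [hrp, hc2]; ring
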